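/- arXiv:1304.0183 — 3 statements merged into one kernel-verified Lean document; each statement's English description precedes it below -/
import Mathlib

section
/- Let P̂_n be the empirical distribution (type) of n i.i.d. samples from a distribution P on an alphabet of size m with full support. Then n·E[D(P̂_n ‖ P)] = ((m-1)/2)·log e + o(1) as n → ∞, where D is the Kullback–Leibler divergence. -/
/-!
The count `N_a` of a letter `a` in the sample is binomial `B(n, P a)`, so
`n · E[D(P̂ₙ ‖ P)] = ∑ₐ E[N_a log (N_a / (n P a))]`. Expanding `y log (y / c)` to second order at
`c = n P a`, the linear term has mean zero and the quadratic term has mean `(1 - P a) / 2`, while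
the remainder is at most `4 |y - c|³ / c²`. By the second and fourth central moments of the
binomial distribution, `E |N_a - n P a|³ = O(n^{3/2})`, so the remainder contributes `O(n^{-1/2})`.
Summing `(1 - P a) / 2` over the `m` letters gives `(m - 1) / 2`.
-/

open Real BigOperators Finset Filter

/-- Empirical distribution (type) of the sample x : Fin n → α. -/
noncomputable def empDist {α : Type*} [Fintype α] [DecidableEq α]
    (n : ℕ) (x : Fin n → α) : α → ℝ :=
  fun a => ((univ.filter (fun i => x i = a)).card : ℝ) / n

/-- Kullback–Leibler divergence (natural log) between pmfs on a finite set. -/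
noncomputable def klDiv' {α : Type*} [Fintype α] (Q P : α → ℝ) : ℝ :=
  ∑ a, Q a * Real.log (Q a / P a)

/-- Expected divergence of the empirical distribution of n i.i.d. samples from P. -/
noncomputable def expKL {α : Type*} [Fintype α] [DecidableEq α]
    (P : α → ℝ) (n : ℕ) : ℝ :=
  ∑ x : Fin n → α, (∏ i, P (x i)) * klDiv' (empDist n x) P

lemma monotoneOn_Ioi_of_hasDerivAt_nonneg {f f' : ℝ → ℝ} {a : ℝ}
    (hf : ∀ x ∈ Set.Ioi a, HasDerivAt f (f' x) x) (hf' : ∀ x ∈ Set.Ioi a, 0 ≤ f' x) :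
    MonotoneOn f (Set.Ioi a) :=
  monotoneOn_of_hasDerivWithinAt_nonneg (convex_Ioi a)
    (fun x hx => (hf x hx).continuousAt.continuousWithinAt)
    (fun x hx => (hf x (interior_subset hx)).hasDerivWithinAt)
    (fun x hx => hf' x (interior_subset hx))

lemma hasDerivAt_mul_log_sub_sub_sq {x : ℝ} (hx : x ≠ 0) :
    HasDerivAt (fun y => y * log y - (y - 1) - (y - 1) ^ 2 / 2) (log x - (x - 1)) x := by
  have h := ((hasDerivAt_mul_log hx).fun_sub ((hasDerivAt_id' x).sub_const 1)).fun_sub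
    ((((hasDerivAt_id' x).sub_const 1).fun_pow 2).div_const 2)
  exact h.congr_deriv (by norm_num)

lemma abs_mul_log_sub_sub_sq_le_of_half_lt {x : ℝ} (hx : 1 / 2 < x) :
    |x * log x - (x - 1) - (x - 1) ^ 2 / 2| ≤ 2 / 3 * |x - 1| ^ 3 := by
  set h : ℝ → ℝ := fun y => y * log y - (y - 1) - (y - 1) ^ 2 / 2
  have hh : ∀ y ∈ Set.Ioi (1 / 2 : ℝ), HasDerivAt h (log y - (y - 1)) y :=
    fun y hy => hasDerivAt_mul_log_sub_sub_sq (by linarith [Set.mem_Ioi.1 hy] : (0 : ℝ) < y).ne'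
  have hcube : ∀ y : ℝ, HasDerivAt (fun y : ℝ => 2 / 3 * (y - 1) ^ 3) (2 * (y - 1) ^ 2) y :=
    fun y => ((((hasDerivAt_id' y).sub_const 1).fun_pow 3).const_mul (2 / 3)).congr_deriv
      (by norm_num; ring)
  -- Both are monotone since `-2 (y - 1)² ≤ log y - (y - 1) ≤ 0` for `y > 1/2`.
  have hup : MonotoneOn (fun y => 2 / 3 * (y - 1) ^ 3 - h y) (Set.Ioi (1 / 2)) :=
    monotoneOn_Ioi_of_hasDerivAt_nonneg (fun y hy => (hcube y).sub (hh y hy)) fun y hy => by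
      have := log_le_sub_one_of_pos (by linarith [Set.mem_Ioi.1 hy] : (0 : ℝ) < y)
      nlinarith [sq_nonneg (y - 1)]
  have hlow : MonotoneOn (fun y => h y + 2 / 3 * (y - 1) ^ 3) (Set.Ioi (1 / 2)) :=
    monotoneOn_Ioi_of_hasDerivAt_nonneg (fun y hy => (hh y hy).add (hcube y)) fun y hy => by
      simp only [Set.mem_Ioi] at hy
      have hy0 : 0 < y := by linarith
      have h1 := one_sub_inv_le_log_of_pos hy0
      have h2 : y - 1 - (1 - y⁻¹) ≤ 2 * (y - 1) ^ 2 := by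
        rw [show y - 1 - (1 - y⁻¹) = (y - 1) ^ 2 / y by field_simp, div_le_iff₀ hy0]
        nlinarith [sq_nonneg (y - 1)]
      linarith
  have h1 : h 1 = 0 := by simp [h]
  have one_mem : (1 : ℝ) ∈ Set.Ioi (1 / 2 : ℝ) := by norm_num
  change |h x| ≤ _
  rw [abs_le]
  rcases le_total x 1 with hx1 | hx1
  · have e1 := hup hx one_mem hx1
    have e2 := hlow hx one_mem hx1
    have : |x - 1| ^ 3 = -(x - 1) ^ 3 := by rw [abs_of_nonpos (by linarith)]; ring
    simp only [h1, sub_self] at e1 e2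
    constructor <;> linarith
  · have e1 := hup one_mem hx hx1
    have e2 := hlow one_mem hx hx1
    rw [abs_of_nonneg (by linarith)]
    simp only [h1, sub_self] at e1 e2
    constructor <;> linarith

lemma abs_mul_log_sub_sub_sq_le {x : ℝ} (hx : 0 ≤ x) :
    |x * log x - (x - 1) - (x - 1) ^ 2 / 2| ≤ 4 * |x - 1| ^ 3 := by
  rcases lt_or_ge (1 / 2) x with hx2 | hx2
  · exact (abs_mul_log_sub_sub_sq_le_of_half_lt hx2).trans
      (by gcongr; norm_num)
  · have hlog : x * log x ≤ 0 := mul_nonpos_of_nonneg_of_nonpos hx (log_nonpos hx (by linarith))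
    have hlog' : x - 1 ≤ x * log x := by
      rcases hx.eq_or_lt with rfl | hx0
      · simp
      · have := one_sub_inv_le_log_of_pos hx0
        calc x - 1 = x * (1 - x⁻¹) := by field_simp
          _ ≤ x * log x := by gcongr
    have hcube : (1 / 2 : ℝ) ^ 3 ≤ |x - 1| ^ 3 := by
      gcongr; rw [abs_of_nonpos (by linarith)]; linarith
    rw [abs_le]
    constructor <;> nlinarith

lemma abs_mul_log_div_sub_sub_sq_le {c y : ℝ} (hc : 0 < c) (hy : 0 ≤ y) :
    |y * log (y / c) - (y - c) - (y - c) ^ 2 / (2 * c)| ≤ 4 * |y - c| ^ 3 / c ^ 2 := by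
  have key := abs_mul_log_sub_sub_sq_le (div_nonneg hy hc.le)
  have e1 : y * log (y / c) - (y - c) - (y - c) ^ 2 / (2 * c)
      = c * (y / c * log (y / c) - (y / c - 1) - (y / c - 1) ^ 2 / 2) := by
    field_simp
  have e2 : |y / c - 1| = |y - c| / c := by
    rw [show y / c - 1 = (y - c) / c by field_simp, abs_div, abs_of_pos hc]
  rw [e2] at key
  rw [e1, abs_mul, abs_of_pos hc]
  calc c * |y / c * log (y / c) - (y / c - 1) - (y / c - 1) ^ 2 / 2|
      ≤ c * (4 * (|y - c| / c) ^ 3) := by gcongr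
    _ = 4 * |y - c| ^ 3 / c ^ 2 := by field_simp

noncomputable def binomialWeight (p : ℝ) (n k : ℕ) : ℝ := n.choose k * p ^ k * (1 - p) ^ (n - k)

namespace binomialWeight

variable {p : ℝ} {n : ℕ}

lemma nonneg (hp0 : 0 ≤ p) (hp1 : p ≤ 1) (k : ℕ) : 0 ≤ binomialWeight p n k := by
  unfold binomialWeight
  have : 0 ≤ 1 - p := by linarith
  positivity

lemma eq_zero_of_lt {k : ℕ} (h : n < k) : binomialWeight p n k = 0 := by
  simp [binomialWeight, Nat.choose_eq_zero_of_lt h]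

lemma succ_zero (p : ℝ) (n : ℕ) : binomialWeight p (n + 1) 0 = (1 - p) * binomialWeight p n 0 := by
  simp only [binomialWeight, Nat.choose_zero_right, Nat.cast_one, pow_zero, Nat.sub_zero, pow_succ]
  ring

lemma succ_succ (p : ℝ) (n k : ℕ) :
    binomialWeight p (n + 1) (k + 1)
      = p * binomialWeight p n k + (1 - p) * binomialWeight p n (k + 1) := by
  rcases lt_or_ge k n with hk | hk
  · simp only [binomialWeight, Nat.choose_succ_succ', Nat.cast_add, Nat.add_sub_add_right]
    rw [show n - k = n - (k + 1) + 1 by omega]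
    ring
  · simp only [binomialWeight, Nat.choose_succ_succ', Nat.cast_add, Nat.add_sub_add_right,
      Nat.choose_eq_zero_of_lt (Nat.lt_succ_of_le hk)]
    ring

lemma sum_succ_mul (p : ℝ) (n : ℕ) (f : ℕ → ℝ) :
    ∑ k ∈ range (n + 2), binomialWeight p (n + 1) k * f k
      = p * ∑ k ∈ range (n + 1), binomialWeight p n k * f (k + 1)
        + (1 - p) * ∑ k ∈ range (n + 1), binomialWeight p n k * f k := by
  have hshift : ∑ k ∈ range (n + 1), binomialWeight p n (k + 1) * f (k + 1)
      + binomialWeight p n 0 * f 0 = ∑ k ∈ range (n + 1), binomialWeight p n k * f k := by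
    rw [sum_range_succ, eq_zero_of_lt (Nat.lt_succ_self n), zero_mul, add_zero,
      sum_range_succ' (fun k => binomialWeight p n k * f k)]
  rw [sum_range_succ', ← hshift, succ_zero]
  simp only [succ_succ, add_mul, mul_assoc, sum_add_distrib, mul_add, ← mul_sum]
  ring

open Polynomial in
lemma sum_mul_descPochhammer_eval (p : ℝ) (n r : ℕ) :
    ∑ k ∈ range (n + 1), binomialWeight p n k * (descPochhammer ℝ r).eval (k : ℝ)
      = (descPochhammer ℝ r).eval (n : ℝ) * p ^ r := by
  -- Differentiate `(X + (1 - p))ⁿ = ∑ₖ C(n, k) (1 - p)ⁿ⁻ᵏ Xᵏ` `r` times and evaluate at `p`.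
  have hexp : ((X + C (1 - p)) ^ n : ℝ[X])
      = ∑ k ∈ range (n + 1), C ((n.choose k : ℝ) * (1 - p) ^ (n - k)) * X ^ k := by
    rw [add_pow]
    refine sum_congr rfl fun k _ => ?_
    rw [C_mul, ← C_pow, ← C_eq_natCast]
    ring
  have hderiv := congrArg (fun f => eval p (derivative^[r] f)) hexp
  simp only [iterate_derivative_X_add_pow, iterate_derivative_sum, iterate_derivative_C_mul,
    iterate_derivative_X_pow_eq_C_mul, eval_finsetSum, eval_mul, eval_C, eval_pow, eval_natCast,
    eval_X, eval_add, add_sub_cancel, one_pow, nsmul_eq_mul, mul_one] at hderiv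
  simp only [descPochhammer_eval_eq_descFactorial]
  rw [hderiv, sum_mul]
  refine sum_congr rfl fun k _ => ?_
  rw [binomialWeight]
  rcases lt_or_ge k r with hk | hk
  · simp [Nat.descFactorial_eq_zero_iff_lt.2 hk]
  · rw [← Nat.sub_add_cancel hk, pow_add, Nat.add_sub_cancel]
    ring

lemma sum_eq_one (p : ℝ) (n : ℕ) : ∑ k ∈ range (n + 1), binomialWeight p n k = 1 := by
  simpa using sum_mul_descPochhammer_eval p n 0

lemma sum_mul_sub (p : ℝ) (n : ℕ) :
    ∑ k ∈ range (n + 1), binomialWeight p n k * (k - n * p) = 0 := by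
  have h1 := sum_mul_descPochhammer_eval p n 1
  simp only [descPochhammer_one, Polynomial.eval_X, pow_one] at h1
  have expand : ∑ k ∈ range (n + 1), binomialWeight p n k * (k - n * p)
      = ∑ k ∈ range (n + 1), binomialWeight p n k * k
        - n * p * ∑ k ∈ range (n + 1), binomialWeight p n k := by
    simp only [mul_sum, ← sum_sub_distrib]
    exact sum_congr rfl fun k _ => by ring
  rw [expand, h1, sum_eq_one]
  ring

lemma sum_mul_sub_sq (p : ℝ) (n : ℕ) :
    ∑ k ∈ range (n + 1), binomialWeight p n k * (k - n * p) ^ 2 = n * p * (1 - p) := by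
  have h := sum_mul_descPochhammer_eval p n
  have h1 := h 1
  have h2 := h 2
  simp only [descPochhammer_succ_right, descPochhammer_zero, one_mul, Nat.cast_one,
    CharP.cast_eq_zero, sub_zero, Polynomial.eval_mul, Polynomial.eval_X, Polynomial.eval_sub,
    Polynomial.eval_one] at h1 h2
  have expand : ∑ k ∈ range (n + 1), binomialWeight p n k * (k - n * p) ^ 2
      = ∑ k ∈ range (n + 1), binomialWeight p n k * (k * (k - 1))
        + (1 - 2 * n * p) * ∑ k ∈ range (n + 1), binomialWeight p n k * k
        + (n * p) ^ 2 * ∑ k ∈ range (n + 1), binomialWeight p n k := by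
    simp only [mul_sum, ← sum_add_distrib]
    exact sum_congr rfl fun k _ => by ring
  rw [expand, h1, h2, sum_eq_one]
  ring

lemma sum_mul_sub_pow_four (p : ℝ) (n : ℕ) :
    ∑ k ∈ range (n + 1), binomialWeight p n k * (k - n * p) ^ 4
      = n * p * (1 - p) * (1 + 3 * (n - 2) * p * (1 - p)) := by
  have h := sum_mul_descPochhammer_eval p n
  have h1 := h 1
  have h2 := h 2
  have h3 := h 3
  have h4 := h 4
  simp only [descPochhammer_succ_right, descPochhammer_zero, one_mul, Nat.cast_one,
    Nat.cast_ofNat, CharP.cast_eq_zero, sub_zero, Polynomial.eval_mul, Polynomial.eval_X,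
    Polynomial.eval_sub, Polynomial.eval_one, Polynomial.eval_ofNat] at h1 h2 h3 h4
  have expand : ∑ k ∈ range (n + 1), binomialWeight p n k * (k - n * p) ^ 4
      = ∑ k ∈ range (n + 1), binomialWeight p n k * (k * (k - 1) * (k - 2) * (k - 3))
        + (6 - 4 * (n * p)) * ∑ k ∈ range (n + 1), binomialWeight p n k * (k * (k - 1) * (k - 2))
        + (7 - 12 * (n * p) + 6 * (n * p) ^ 2) *
          ∑ k ∈ range (n + 1), binomialWeight p n k * (k * (k - 1))
        + (1 - 4 * (n * p) + 6 * (n * p) ^ 2 - 4 * (n * p) ^ 3) *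
          ∑ k ∈ range (n + 1), binomialWeight p n k * k
        + (n * p) ^ 4 * ∑ k ∈ range (n + 1), binomialWeight p n k := by
    simp only [mul_sum, ← sum_add_distrib]
    exact sum_congr rfl fun k _ => by ring
  rw [expand, h1, h2, h3, h4, sum_eq_one]
  ring

lemma sum_mul_sub_pow_four_le (hp0 : 0 ≤ p) (hp1 : p ≤ 1) :
    ∑ k ∈ range (n + 1), binomialWeight p n k * (k - n * p) ^ 4 ≤ 3 * n ^ 2 := by
  rw [sum_mul_sub_pow_four]
  have hvar : p * (1 - p) ≤ 1 / 4 := by nlinarith [sq_nonneg (1 - 2 * p)]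
  have hvar0 : 0 ≤ p * (1 - p) := by nlinarith
  have hnsq : (n : ℝ) ≤ n ^ 2 := by exact_mod_cast Nat.le_self_pow two_ne_zero n
  have hsq : (p * (1 - p)) ^ 2 ≤ 1 / 16 := by nlinarith
  have e : n * p * (1 - p) * (1 + 3 * (n - 2) * p * (1 - p))
      = n * (p * (1 - p)) + 3 * n ^ 2 * (p * (1 - p)) ^ 2 - 6 * n * (p * (1 - p)) ^ 2 := by ring
  rw [e]
  nlinarith [mul_le_mul_of_nonneg_left hvar (by positivity : (0 : ℝ) ≤ n),
    mul_le_mul_of_nonneg_left hsq (by positivity : (0 : ℝ) ≤ 3 * n ^ 2),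
    mul_nonneg (by positivity : (0 : ℝ) ≤ 6 * n) (sq_nonneg (p * (1 - p)))]

lemma sum_mul_abs_sub_pow_three_le (hp0 : 0 ≤ p) (hp1 : p ≤ 1) (hn : 1 ≤ n) :
    ∑ k ∈ range (n + 1), binomialWeight p n k * |k - n * p| ^ 3 ≤ 2 * n * √n := by
  set δ := √(n : ℝ)
  have hδ0 : 0 < δ := Real.sqrt_pos.2 (by exact_mod_cast hn)
  have hδsq : δ ^ 2 = n := Real.sq_sqrt (Nat.cast_nonneg n)
  -- AM-GM: `2 |y|³ ≤ δ y² + y⁴ / δ`, then choose `δ = √n` to balance the two moments.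
  have amgm : ∀ y : ℝ, |y| ^ 3 ≤ δ / 2 * y ^ 2 + 1 / (2 * δ) * y ^ 4 := fun y => by
    have e : δ / 2 * y ^ 2 + 1 / (2 * δ) * y ^ 4 - |y| ^ 3 = |y| ^ 2 * (δ - |y|) ^ 2 / (2 * δ) := by
      rw [show y ^ 4 = (|y| ^ 2) ^ 2 by rw [sq_abs]; ring, ← sq_abs y]
      field_simp
      ring
    have : 0 ≤ |y| ^ 2 * (δ - |y|) ^ 2 / (2 * δ) := by positivity
    linarith
  have hvar : n * p * (1 - p) ≤ n / 4 := by
    have : p * (1 - p) ≤ 1 / 4 := by nlinarith [sq_nonneg (1 - 2 * p)]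
    nlinarith [(Nat.cast_nonneg n : (0 : ℝ) ≤ n)]
  calc ∑ k ∈ range (n + 1), binomialWeight p n k * |k - n * p| ^ 3
      ≤ ∑ k ∈ range (n + 1), binomialWeight p n k *
          (δ / 2 * (k - n * p) ^ 2 + 1 / (2 * δ) * (k - n * p) ^ 4) :=
        sum_le_sum fun k _ => mul_le_mul_of_nonneg_left (amgm _) (nonneg hp0 hp1 k)
    _ = δ / 2 * ∑ k ∈ range (n + 1), binomialWeight p n k * (k - n * p) ^ 2
          + 1 / (2 * δ) * ∑ k ∈ range (n + 1), binomialWeight p n k * (k - n * p) ^ 4 := by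
        simp only [mul_sum, ← sum_add_distrib]
        exact sum_congr rfl fun k _ => by ring
    _ ≤ δ / 2 * (n / 4) + 1 / (2 * δ) * (3 * n ^ 2) := by
        rw [sum_mul_sub_sq]
        gcongr
        exact sum_mul_sub_pow_four_le hp0 hp1
    _ ≤ 2 * n * δ := by
        rw [← hδsq]
        field_simp
        nlinarith [pow_pos hδ0 5]

lemma abs_sum_mul_mul_log_sub_le (hp0 : 0 < p) (hp1 : p ≤ 1) (hn : 1 ≤ n) :
    |∑ k ∈ range (n + 1), binomialWeight p n k * (k * log (k / (n * p))) - (1 - p) / 2|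
      ≤ 8 / (p ^ 2 * √n) := by
  have hn0 : (0 : ℝ) < n := by exact_mod_cast hn
  have hc : 0 < (n : ℝ) * p := by positivity
  have hsqrt : √(n : ℝ) ^ 2 = n := Real.sq_sqrt hn0.le
  -- Subtract the second-order Taylor polynomial of `k ↦ k log (k / np)` at `np`,
  -- whose expectation is exactly `(1 - p) / 2`.
  have hcentre : ∑ k ∈ range (n + 1), binomialWeight p n k * (k * log (k / (n * p))) - (1 - p) / 2
      = ∑ k ∈ range (n + 1), binomialWeight p n k *
          (k * log (k / (n * p)) - (k - n * p) - (k - n * p) ^ 2 / (2 * (n * p))) := by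
    have expand : ∑ k ∈ range (n + 1), binomialWeight p n k *
          (k * log (k / (n * p)) - (k - n * p) - (k - n * p) ^ 2 / (2 * (n * p)))
        = ∑ k ∈ range (n + 1), binomialWeight p n k * (k * log (k / (n * p)))
          - ∑ k ∈ range (n + 1), binomialWeight p n k * (k - n * p)
          - 1 / (2 * (n * p)) * ∑ k ∈ range (n + 1), binomialWeight p n k * (k - n * p) ^ 2 := by
      simp only [mul_sum, ← sum_sub_distrib]
      exact sum_congr rfl fun k _ => by ring
    rw [expand, sum_mul_sub, sum_mul_sub_sq]
    field_simp
    ring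
  rw [hcentre]
  calc |∑ k ∈ range (n + 1), binomialWeight p n k *
          (k * log (k / (n * p)) - (k - n * p) - (k - n * p) ^ 2 / (2 * (n * p)))|
      ≤ ∑ k ∈ range (n + 1), binomialWeight p n k *
          |k * log (k / (n * p)) - (k - n * p) - (k - n * p) ^ 2 / (2 * (n * p))| := by
        refine (abs_sum_le_sum_abs _ _).trans_eq (sum_congr rfl fun k _ => ?_)
        rw [abs_mul, abs_of_nonneg (nonneg hp0.le hp1 k)]
    _ ≤ ∑ k ∈ range (n + 1), binomialWeight p n k * (4 * |k - n * p| ^ 3 / (n * p) ^ 2) := by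
        gcongr with k
        · exact nonneg hp0.le hp1 k
        · exact abs_mul_log_div_sub_sub_sq_le hc (Nat.cast_nonneg k)
    _ = 4 / (n * p) ^ 2 * ∑ k ∈ range (n + 1), binomialWeight p n k * |k - n * p| ^ 3 := by
        rw [mul_sum]
        exact sum_congr rfl fun k _ => by ring
    _ ≤ 4 / (n * p) ^ 2 * (2 * n * √n) := by
        gcongr
        exact sum_mul_abs_sub_pow_three_le hp0.le hp1 hn
    _ = 8 / (p ^ 2 * √n) := by
        field_simp
        rw [hsqrt]
        ring

lemma tendsto_sum_mul_mul_log (hp0 : 0 < p) (hp1 : p ≤ 1) :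
    Tendsto (fun n : ℕ => ∑ k ∈ range (n + 1), binomialWeight p n k * (k * log (k / (n * p))))
      atTop (nhds ((1 - p) / 2)) := by
  rw [← tendsto_sub_nhds_zero_iff]
  have hsqrt : Tendsto (fun n : ℕ => p ^ 2 * √(n : ℝ)) atTop atTop :=
    (Real.tendsto_sqrt_atTop.comp tendsto_natCast_atTop_atTop).const_mul_atTop (by positivity)
  refine squeeze_zero_norm' ?_ ((tendsto_const_nhds (x := (8 : ℝ))).div_atTop hsqrt)
  filter_upwards [eventually_ge_atTop 1] with n hn
  exact abs_sum_mul_mul_log_sub_le hp0 hp1 hn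

end binomialWeight

lemma sum_prod_mul_card_filter_eq {α : Type*} [Fintype α] [DecidableEq α] (P : α → ℝ)
    (hsum : ∑ a, P a = 1) (a : α) (n : ℕ) (f : ℕ → ℝ) :
    ∑ x : Fin n → α, (∏ i, P (x i)) * f #{i | x i = a}
      = ∑ k ∈ range (n + 1), binomialWeight (P a) n k * f k := by
  induction n generalizing f with
  | zero => simp [binomialWeight]
  | succ n ih =>
    have hcons : ∑ x : Fin (n + 1) → α, (∏ i, P (x i)) * f #{i | x i = a}
        = ∑ b : α, P b * ∑ k ∈ range (n + 1),
            binomialWeight (P a) n k * f ((if b = a then 1 else 0) + k) := by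
      calc ∑ x : Fin (n + 1) → α, (∏ i, P (x i)) * f #{i | x i = a}
          = ∑ x : α × (Fin n → α), P x.1 * ((∏ i, P (x.2 i)) *
              f ((if x.1 = a then 1 else 0) + #{i | x.2 i = a})) := by
            refine Fintype.sum_equiv (Fin.consEquiv fun _ => α).symm _ _ fun x => ?_
            simp only [Fin.consEquiv_symm_apply, Fin.tail, Fin.prod_univ_succ, card_filter,
              Fin.sum_univ_succ]
            ring
        _ = ∑ b : α, P b * ∑ y : Fin n → α,
              (∏ i, P (y i)) * f ((if b = a then 1 else 0) + #{i | y i = a}) := by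
            rw [Fintype.sum_prod_type]
            simp only [mul_sum]
        _ = _ := sum_congr rfl fun b _ => by rw [ih fun k => f ((if b = a then 1 else 0) + k)]
    have hcompl : ∑ b ∈ {a}ᶜ, P b = 1 - P a := by
      rw [← hsum, Fintype.sum_eq_add_sum_compl a]
      ring
    rw [hcons, Fintype.sum_eq_add_sum_compl a, if_pos rfl, binomialWeight.sum_succ_mul, ← hcompl,
      sum_mul]
    refine congrArg₂ _ (by simp only [add_comm 1]) (sum_congr rfl fun b hb => ?_)
    rw [if_neg (by simpa using hb)]
    simp

lemma natCast_mul_expKL {α : Type*} [Fintype α] [DecidableEq α] (P : α → ℝ)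
    (hsum : ∑ a, P a = 1) {n : ℕ} (hn : n ≠ 0) :
    n * expKL P n
      = ∑ a, ∑ k ∈ range (n + 1), binomialWeight (P a) n k * (k * log (k / (n * P a))) := by
  have hn' : (n : ℝ) ≠ 0 := Nat.cast_ne_zero.2 hn
  calc n * expKL P n
      = ∑ x : Fin n → α, ∑ a, (∏ i, P (x i)) *
          ((#{i | x i = a} : ℕ) * log ((#{i | x i = a} : ℕ) / (n * P a))) := by
        simp only [expKL, klDiv', empDist, mul_sum, div_div]
        refine sum_congr rfl fun x _ => sum_congr rfl fun a _ => ?_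
        field_simp
    _ = _ := by
        rw [sum_comm]
        exact sum_congr rfl fun a _ =>
          sum_prod_mul_card_filter_eq P hsum a n fun k => k * log (k / (n * P a))

/-- For i.i.d. samples from a full-support P on an alphabet of size m,
n·E[D(P̂_n‖P)] = ((m-1)/2)·log e + o(1) as n → ∞.  (Natural logarithms are used, so
log e = 1 and the limit is (m-1)/2.) -/
theorem stmt6 {α : Type*} [Fintype α] [DecidableEq α]
    (P : α → ℝ) (hpos : ∀ a, 0 < P a) (hsum : ∑ a, P a = 1)
    (m : ℕ) (hm : Fintype.card α = m) :
    Tendsto (fun n : ℕ => (n : ℝ) * expKL P n) atTop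
      (nhds (((m : ℝ) - 1) / 2)) := by
  have hle : ∀ a, P a ≤ 1 := fun a =>
    hsum ▸ single_le_sum (fun b _ => (hpos b).le) (mem_univ a)
  have hlim : Tendsto (fun n : ℕ => ∑ a, ∑ k ∈ range (n + 1),
      binomialWeight (P a) n k * (k * log (k / (n * P a)))) atTop (nhds (∑ a, (1 - P a) / 2)) :=
    tendsto_finsetSum _ fun a _ => binomialWeight.tendsto_sum_mul_mul_log (hpos a) (hle a)
  have hval : ∑ a, (1 - P a) / 2 = ((m : ℝ) - 1) / 2 := by
    rw [← sum_div, sum_sub_distrib, sum_const, card_univ, hsum, hm, nsmul_one]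
  rw [← hval]
  refine hlim.congr' ?_
  filter_upwards [eventually_ne_atTop 0] with n hn
  exact (natCast_mul_expKL P hsum hn).symm
end

section
/- Let P̂_n be the empirical distribution of n i.i.d. samples from a distribution P on an alphabet of size m, and let Ĥ = H(P̂_n) be the empirical entropy. Then E[Ĥ] = H(P) - ((m-1) log e)/(2n) - o(1/n) as n → ∞; in particular E[Ĥ] ≤ H(P). -/
open Real BigOperators Finset Filter

/-- Entropy (natural log) of a probability mass function on a finite set. -/
noncomputable def pmfEnt {α : Type*} [Fintype α] (f : α → ℝ) : ℝ :=
  ∑ a, Real.negMulLog (f a)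

/-- Expected empirical entropy of n i.i.d. samples from P. -/
noncomputable def expEmpEnt {α : Type*} [Fintype α] [DecidableEq α]
    (P : α → ℝ) (n : ℕ) : ℝ :=
  ∑ x : Fin n → α, (∏ i, P (x i)) * pmfEnt (empDist n x)


noncomputable def binExp (n : ℕ) (p : ℝ) (f : ℕ → ℝ) : ℝ :=
  ∑ k ∈ Finset.range (n+1), (n.choose k : ℝ) * p^k * (1-p)^(n-k) * f k

lemma binExp_one (n : ℕ) (p : ℝ) : binExp n p (fun _ => 1) = 1 := by
  have h := add_pow p (1-p) n
  simp only [add_sub_cancel, one_pow] at h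
  unfold binExp
  conv_rhs => rw [h]
  exact Finset.sum_congr rfl (by intros; ring)

lemma binExp_add (n : ℕ) (p : ℝ) (f g : ℕ → ℝ) :
    binExp n p (fun k => f k + g k) = binExp n p f + binExp n p g := by
  unfold binExp
  rw [← Finset.sum_add_distrib]
  exact Finset.sum_congr rfl (by intros; ring)

lemma binExp_const_mul (n : ℕ) (p : ℝ) (c : ℝ) (f : ℕ → ℝ) :
    binExp n p (fun k => c * f k) = c * binExp n p f := by
  unfold binExp
  rw [Finset.mul_sum]
  exact Finset.sum_congr rfl (by intros; ring)

lemma binExp_le (n : ℕ) (p : ℝ) (hp : 0 ≤ p) (hp1 : p ≤ 1) {f g : ℕ → ℝ}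
    (h : ∀ k, f k ≤ g k) : binExp n p f ≤ binExp n p g := by
  apply Finset.sum_le_sum
  intro k _
  have h1 : (0:ℝ) ≤ 1 - p := by linarith
  have hw : (0:ℝ) ≤ (n.choose k : ℝ) * p^k * (1-p)^(n-k) := by positivity
  exact mul_le_mul_of_nonneg_left (h k) hw

lemma binExp_nonneg (n : ℕ) (p : ℝ) (hp : 0 ≤ p) (hp1 : p ≤ 1) {f : ℕ → ℝ}
    (h : ∀ k, 0 ≤ f k) : 0 ≤ binExp n p f := by
  have := binExp_le n p hp hp1 (f := fun _ => 0) (g := f) h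
  simpa [binExp] using this

lemma binExp_abs_le (n : ℕ) (p : ℝ) (hp : 0 ≤ p) (hp1 : p ≤ 1) {f g : ℕ → ℝ}
    (h : ∀ k, |f k| ≤ g k) : |binExp n p f| ≤ binExp n p g := by
  rw [abs_le]
  constructor
  · have h2 := binExp_le n p hp hp1 (f := fun k => -g k) (g := f)
      (fun k => by show -g k ≤ f k; linarith [(abs_le.mp (h k)).1])
    have hneg : binExp n p (fun k => -g k) = -binExp n p g := by
      have := binExp_const_mul n p (-1) g
      simpa [neg_one_mul] using this
    linarith [hneg ▸ h2]
  · exact binExp_le n p hp hp1 (fun k => (abs_le.mp (h k)).2)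


lemma binExp_mul_succ (n : ℕ) (p : ℝ) (f : ℕ → ℝ) :
    binExp (n+1) p (fun k => (k:ℝ) * f k)
      = (n+1) * p * binExp n p (fun k => f (k+1)) := by
  unfold binExp
  rw [Finset.sum_range_succ']
  simp only [Nat.cast_zero, zero_mul, mul_zero, add_zero]
  rw [Finset.mul_sum]
  apply Finset.sum_congr rfl
  intro j hj
  have hc : ((n+1) : ℝ) * (n.choose j : ℝ) = ((n+1).choose (j+1) : ℝ) * (j+1) := by
    exact_mod_cast congrArg (Nat.cast : ℕ → ℝ) (Nat.add_one_mul_choose_eq n j)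
  have hsub : n + 1 - (j + 1) = n - j := by omega
  rw [hsub]
  push_cast
  linear_combination (-(p^(j+1) * (1-p)^(n-j) * f (j+1))) * hc


lemma binExp_congr (n : ℕ) (p : ℝ) {f g : ℕ → ℝ} (h : ∀ k, f k = g k) :
    binExp n p f = binExp n p g := by rw [funext h]

lemma binExp_F1 (n : ℕ) (p : ℝ) : binExp n p (fun k => (k:ℝ)) = n * p := by
  cases n with
  | zero => simp [binExp]
  | succ m =>
      have h := binExp_mul_succ m p (fun _ => 1)
      rw [binExp_one] at h
      rw [binExp_congr (m+1) p (fun k => (mul_one (k:ℝ)).symm), h]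
      push_cast; ring

lemma binExp_F2 (n : ℕ) (p : ℝ) :
    binExp n p (fun k => (k:ℝ) * ((k:ℝ)-1)) = n * ((n:ℝ)-1) * p^2 := by
  cases n with
  | zero => simp [binExp]
  | succ m =>
      have h := binExp_mul_succ m p (fun j => (j:ℝ)-1)
      rw [binExp_congr m p (fun k => (by push_cast; ring :
        (((k+1:ℕ)):ℝ)-1 = (k:ℝ))), binExp_F1] at h
      rw [h]; push_cast; ring

lemma binExp_F3 (n : ℕ) (p : ℝ) :
    binExp n p (fun k => (k:ℝ) * (((k:ℝ)-1) * ((k:ℝ)-2)))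
      = n * ((n:ℝ)-1) * ((n:ℝ)-2) * p^3 := by
  cases n with
  | zero => simp [binExp]
  | succ m =>
      have h := binExp_mul_succ m p (fun j => ((j:ℝ)-1) * ((j:ℝ)-2))
      rw [binExp_congr m p (fun k => (by push_cast; ring :
        ((((k+1:ℕ)):ℝ)-1) * ((((k+1:ℕ)):ℝ)-2) = (k:ℝ) * ((k:ℝ)-1))), binExp_F2] at h
      rw [h]; push_cast; ring

lemma binExp_F4 (n : ℕ) (p : ℝ) :
    binExp n p (fun k => (k:ℝ) * (((k:ℝ)-1) * (((k:ℝ)-2) * ((k:ℝ)-3))))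
      = n * ((n:ℝ)-1) * ((n:ℝ)-2) * ((n:ℝ)-3) * p^4 := by
  cases n with
  | zero => simp [binExp]
  | succ m =>
      have h := binExp_mul_succ m p (fun j => ((j:ℝ)-1) * (((j:ℝ)-2) * ((j:ℝ)-3)))
      rw [binExp_congr m p (fun k => (by push_cast; ring :
        ((((k+1:ℕ)):ℝ)-1) * (((((k+1:ℕ)):ℝ)-2) * ((((k+1:ℕ)):ℝ)-3))
          = (k:ℝ) * (((k:ℝ)-1) * ((k:ℝ)-2)))), binExp_F3] at h
      rw [h]; push_cast; ring


lemma binExp_central2 (n : ℕ) (p : ℝ) :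
    binExp n p (fun k => ((k:ℝ) - n*p)^2) = n*p*(1-p) := by
  have hdec : ∀ k:ℕ, ((k:ℝ) - n*p)^2
      = (k:ℝ)*((k:ℝ)-1) + ((1-2*((n:ℝ)*p)) * (k:ℝ) + ((n:ℝ)*p)^2 * 1) :=
    fun k => by ring
  rw [binExp_congr n p hdec, binExp_add, binExp_add, binExp_const_mul,
    binExp_const_mul, binExp_F2, binExp_F1, binExp_one]
  ring

lemma binExp_central4 (n : ℕ) (p : ℝ) :
    binExp n p (fun k => ((k:ℝ) - n*p)^4)
      = 3*((n:ℝ)*p*(1-p))^2 + (n:ℝ)*p*(1-p)*(1 - 6*p*(1-p)) := by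
  have hdec : ∀ k:ℕ, ((k:ℝ) - n*p)^4
      = (k:ℝ)*(((k:ℝ)-1)*(((k:ℝ)-2)*((k:ℝ)-3)))
        + ((6-4*((n:ℝ)*p)) * ((k:ℝ)*(((k:ℝ)-1)*((k:ℝ)-2)))
        + ((7-12*((n:ℝ)*p)+6*((n:ℝ)*p)^2) * ((k:ℝ)*((k:ℝ)-1))
        + ((1-4*((n:ℝ)*p)+6*((n:ℝ)*p)^2-4*((n:ℝ)*p)^3) * (k:ℝ)
        + ((n:ℝ)*p)^4 * 1))) := fun k => by ring
  rw [binExp_congr n p hdec, binExp_add, binExp_add, binExp_add, binExp_add,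
    binExp_const_mul, binExp_const_mul, binExp_const_mul, binExp_const_mul,
    binExp_F4, binExp_F3, binExp_F2, binExp_F1, binExp_one]
  ring

lemma binExp_central4_le (n : ℕ) (p : ℝ) (hp : 0 ≤ p) (hp1 : p ≤ 1) :
    binExp n p (fun k => ((k:ℝ) - n*p)^4)
      ≤ 3*((n:ℝ)*p*(1-p))^2 + (n:ℝ)*p*(1-p) := by
  rw [binExp_central4]
  have hn : (0:ℝ) ≤ n := Nat.cast_nonneg n
  nlinarith [mul_nonneg (mul_nonneg hn hp) (by linarith : (0:ℝ) ≤ 1-p),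
    mul_nonneg hp (by linarith : (0:ℝ) ≤ 1-p)]


noncomputable def hFun (y : ℝ) : ℝ := y * Real.log y - y + 1

lemma hFun_nonneg {y : ℝ} (hy : 0 ≤ y) : 0 ≤ hFun y := by
  rcases eq_or_lt_of_le hy with h | h
  · simp [hFun, ← h]
  · have h1 : Real.log y⁻¹ ≤ y⁻¹ - 1 := Real.log_le_sub_one_of_pos (inv_pos.2 h)
    rw [Real.log_inv] at h1
    have h2 := mul_le_mul_of_nonneg_left h1 (le_of_lt h)
    rw [mul_sub, mul_inv_cancel₀ (ne_of_gt h)] at h2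
    unfold hFun; nlinarith

lemma hFun_le_sq {y : ℝ} (hy : 0 ≤ y) : hFun y ≤ (y-1)^2 := by
  rcases eq_or_lt_of_le hy with h | h
  · simp [hFun, ← h]
  · have h1 : Real.log y ≤ y - 1 := Real.log_le_sub_one_of_pos h
    have h2 := mul_le_mul_of_nonneg_left h1 (le_of_lt h)
    unfold hFun; nlinarith

lemma hFun_taylor {y : ℝ} (hy : |y - 1| ≤ 1/2) :
    |hFun y - (y-1)^2/2| ≤ 4 * |y-1|^3 := by
  have hax : |1 - y| ≤ 1/2 := by rw [abs_sub_comm]; exact hy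
  have hlt : |1 - y| < 1 := lt_of_le_of_lt hax (by norm_num)
  have hT := Real.abs_log_sub_add_sum_range_le hlt 2
  have hsum : (∑ i ∈ range 2, (1-y) ^ (i + 1) / (i + 1)) = (1-y) + (1-y)^2/2 := by
    rw [Finset.sum_range_succ, Finset.sum_range_succ, Finset.sum_range_zero]
    norm_num
  rw [hsum] at hT
  have h1y : (1:ℝ) - (1 - y) = y := by ring
  rw [h1y] at hT
  -- hT : |(1-y) + (1-y)^2/2 + log y| ≤ |1-y|^(2+1)/(1 - |1-y|)
  set E := (1-y) + (1-y)^2/2 + Real.log y with hE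
  have hEb : |E| ≤ 2 * |1-y|^3 := by
    refine hT.trans ?_
    rw [div_le_iff₀ (by linarith)]
    have h30 : |1-y|^(2+1) = |1-y|^3 := by norm_num
    rw [h30]
    nlinarith [pow_nonneg (abs_nonneg (1-y)) 3, abs_nonneg (1-y)]
  have hid : hFun y - (y-1)^2/2 = (1-y)^3/2 + y * E := by
    unfold hFun
    rw [hE]; ring
  rw [hid]
  have hyb : |y| ≤ 3/2 := by
    have := abs_sub_abs_le_abs_sub y 1
    simp only [abs_one] at this
    linarith [abs_nonneg (y-1), hy, this]
  have habs : |(1-y)^3/2 + y * E| ≤ |(1-y)^3/2| + |y * E| := abs_add_le _ _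
  rw [abs_mul, abs_div, abs_pow] at habs
  have h1 : |1 - y| = |y - 1| := abs_sub_comm _ _
  have h2 : |y| * |E| ≤ (3/2) * (2 * |y-1|^3) := by
    have := mul_le_mul hyb hEb (abs_nonneg E) (by norm_num)
    rw [h1] at this
    exact this
  calc |(1-y)^3/2 + y * E| ≤ |1-y|^3 / |(2:ℝ)| + |y| * |E| := habs
    _ ≤ |y-1|^3/2 + 3 * |y-1|^3 := by
        rw [h1] at *
        simp only [abs_two]
        linarith
    _ ≤ 4 * |y-1|^3 := by linarith [pow_nonneg (abs_nonneg (y-1)) 3]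

lemma hFun_eps {y ε : ℝ} (hy : 0 ≤ y) (hε : 0 < ε) (hε2 : ε ≤ 1/2) :
    |hFun y - (y-1)^2/2| ≤ 4*ε*(y-1)^2 + (3/(2*ε^2))*((y-1)^2)^2 := by
  by_cases hcase : |y-1| ≤ ε
  · have ht := hFun_taylor (hcase.trans hε2)
    have h3 : |y-1|^3 = |y-1| * (y-1)^2 := by
      rw [pow_succ, sq_abs]; ring
    have : 4 * |y-1|^3 ≤ 4*ε*(y-1)^2 := by
      rw [h3]
      nlinarith [sq_nonneg (y-1)]
    have hpos : 0 ≤ (3/(2*ε^2))*((y-1)^2)^2 := by positivity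
    linarith
  · push_neg at hcase
    have h1 := hFun_nonneg hy
    have h2 := hFun_le_sq hy
    have hb : |hFun y - (y-1)^2/2| ≤ (3/2) * (y-1)^2 := by
      rw [abs_le]; constructor <;> nlinarith [sq_nonneg (y-1)]
    have hsq : ε^2 ≤ (y-1)^2 := by
      have := abs_nonneg (y-1)
      nlinarith [sq_abs (y-1)]
    have hstep : (3/2) * (y-1)^2 ≤ (3/(2*ε^2))*((y-1)^2)^2 := by
      have e1 : 3/(2*ε^2)*((y-1)^2)^2 = (3*((y-1)^2)^2)/(2*ε^2) := by ring
      rw [e1, le_div_iff₀ (by positivity)]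
      nlinarith [sq_nonneg (y-1), sq_nonneg ((y-1)^2 - ε^2)]
    have hpos : 0 ≤ 4*ε*(y-1)^2 := by positivity
    linarith


lemma binExp_succ (n : ℕ) (p : ℝ) (f : ℕ → ℝ) :
    binExp (n+1) p f
      = p * binExp n p (fun k => f (k+1)) + (1-p) * binExp n p f := by
  unfold binExp
  rw [Finset.sum_range_succ' (fun k => ((n+1).choose k : ℝ) * p^k * (1-p)^(n+1-k) * f k) (n+1)]
  have hsplit : ∀ j ∈ Finset.range (n+1),
      (((n+1).choose (j+1) : ℝ)) * p^(j+1) * (1-p)^(n+1-(j+1)) * f (j+1)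
        = p * ((n.choose j : ℝ) * p^j * (1-p)^(n-j) * f (j+1))
          + (n.choose (j+1) : ℝ) * p^(j+1) * (1-p)^(n+1-(j+1)) * f (j+1) := by
    intro j hj
    have hc : ((n+1).choose (j+1) : ℝ) = (n.choose j : ℝ) + (n.choose (j+1) : ℝ) := by
      exact_mod_cast congrArg (Nat.cast : ℕ → ℝ) (Nat.choose_succ_succ n j)
    have hsub : n + 1 - (j+1) = n - j := by omega
    rw [hsub, hc]; ring
  rw [Finset.sum_congr rfl hsplit, Finset.sum_add_distrib, ← Finset.mul_sum]
  set h : ℕ → ℝ := fun k => (n.choose k : ℝ) * p^k * (1-p)^(n+1-k) * f k with hh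
  have e2 := Finset.sum_range_succ' h (n+1)
  have e3 := Finset.sum_range_succ h (n+1)
  have e4 : h (n+1) = 0 := by
    simp [hh, Nat.choose_eq_zero_of_lt (Nat.lt_succ_self n)]
  have e5 : ∑ k ∈ Finset.range (n+1), h k
      = (1-p) * ∑ k ∈ Finset.range (n+1), (n.choose k : ℝ) * p^k * (1-p)^(n-k) * f k := by
    rw [Finset.mul_sum]
    apply Finset.sum_congr rfl
    intro k hk
    have hk' : k ≤ n := Nat.lt_succ_iff.mp (Finset.mem_range.mp hk)
    have hsub : n + 1 - k = (n - k) + 1 := by omega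
    simp only [hh, hsub, pow_succ]
    ring
  have e6 : ∑ j ∈ Finset.range (n+1),
      (n.choose (j+1) : ℝ) * p^(j+1) * (1-p)^(n+1-(j+1)) * f (j+1)
      = ∑ j ∈ Finset.range (n+1), h (j+1) := rfl
  have e7 : (((n+1)).choose 0 : ℝ) * p^0 * (1-p)^(n+1-0) * f 0 = h 0 := by
    simp [hh]
  rw [e6, e7]
  linarith [e2, e3, e4, e5]


lemma count_cons {α : Type*} [Fintype α] [DecidableEq α] (n : ℕ) (b : α) (y : Fin n → α) (a : α) :
    (univ.filter fun i : Fin (n+1) => (Fin.cons b y : Fin (n+1) → α) i = a).card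
      = (if b = a then 1 else 0) + (univ.filter fun i : Fin n => y i = a).card := by
  rw [Finset.card_filter, Finset.card_filter, Fin.sum_univ_succ]
  simp only [Fin.cons_zero, Fin.cons_succ]

lemma marg {α : Type*} [Fintype α] [DecidableEq α] (P : α → ℝ) (hsum : ∑ a, P a = 1)
    (n : ℕ) (a : α) (f : ℕ → ℝ) :
    ∑ x : Fin n → α, (∏ i, P (x i)) * f ((univ.filter fun i => x i = a).card)
      = binExp n (P a) f := by
  induction n generalizing f with
  | zero =>
      simp [binExp]
  | succ n ih =>
      rw [← (Fin.consEquiv (fun _ : Fin (n+1) => α)).sum_comp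
        (fun x => (∏ i, P (x i)) * f ((univ.filter fun i => x i = a).card))]
      rw [Fintype.sum_prod_type]
      have hterm : ∀ (b : α) (y : Fin n → α),
          (∏ i, P ((Fin.consEquiv (fun _ : Fin (n+1) => α)) (b, y) i))
            * f ((univ.filter fun i => (Fin.consEquiv (fun _ : Fin (n+1) => α)) (b, y) i = a).card)
          = P b * ((∏ i, P (y i))
            * f ((if b = a then 1 else 0) + (univ.filter fun i => y i = a).card)) := by
        intro b y
        have hc : ((Fin.consEquiv (fun _ : Fin (n+1) => α)) (b, y) : Fin (n+1) → α)
            = (Fin.cons b y : Fin (n+1) → α) := rfl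
        rw [hc, count_cons, Fin.prod_univ_succ]
        simp only [Fin.cons_zero, Fin.cons_succ]
        ring
      rw [Finset.sum_congr rfl (fun b _ => Finset.sum_congr rfl (fun y _ => hterm b y))]
      rw [← Finset.add_sum_erase univ _ (Finset.mem_univ a)]
      have hA : ∑ y : Fin n → α, P a * ((∏ i, P (y i))
          * f ((if a = a then 1 else 0) + (univ.filter fun i => y i = a).card))
          = P a * binExp n (P a) (fun k => f (k+1)) := by
        rw [← Finset.mul_sum, ← ih (fun k => f (k+1))]
        congr 1
        apply Finset.sum_congr rfl
        intro y _
        congr 1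
        simp [add_comm]
      have hB : ∀ b ∈ univ.erase a, (∑ y : Fin n → α, P b * ((∏ i, P (y i))
          * f ((if b = a then 1 else 0) + (univ.filter fun i => y i = a).card)))
          = P b * binExp n (P a) f := by
        intro b hb
        have hba : b ≠ a := Finset.ne_of_mem_erase hb
        rw [← Finset.mul_sum]
        congr 1
        rw [← ih f]
        apply Finset.sum_congr rfl
        intro y _
        congr 1
        simp [if_neg hba]
      rw [hA, Finset.sum_congr rfl hB, ← Finset.sum_mul]
      have herase : ∑ b ∈ univ.erase a, P b = 1 - P a := by
        have := Finset.add_sum_erase univ P (Finset.mem_univ a)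
        linarith
      rw [herase, binExp_succ]


lemma perLetter (n : ℕ) (hn : 1 ≤ n) (p : ℝ) (hp : 0 < p) :
    Real.negMulLog p - binExp n p (fun k => Real.negMulLog ((k:ℝ)/n))
      = p * binExp n p (fun k => hFun ((k:ℝ)/((n:ℝ)*p))) := by
  have hn0 : (0:ℝ) < n := by exact_mod_cast hn
  have hpt : ∀ k:ℕ, Real.negMulLog ((k:ℝ)/n)
      = ((Real.negMulLog p - p)/((n:ℝ)*p)) * (k:ℝ)
        + ((-p) * hFun ((k:ℝ)/((n:ℝ)*p)) + p * 1) := by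
    intro k
    rcases Nat.eq_zero_or_pos k with hk | hk
    · subst hk
      simp [hFun, Real.negMulLog]
    · have hk0 : (0:ℝ) < k := by exact_mod_cast hk
      have hy : (0:ℝ) < (k:ℝ)/((n:ℝ)*p) := by positivity
      have hkn : (k:ℝ)/(n:ℝ) = p * ((k:ℝ)/((n:ℝ)*p)) := by field_simp
      rw [hkn]
      simp only [Real.negMulLog, hFun]
      rw [Real.log_mul (ne_of_gt hp) (ne_of_gt hy)]
      ring
  rw [binExp_congr n p hpt, binExp_add, binExp_add, binExp_const_mul,
    binExp_const_mul, binExp_const_mul, binExp_F1, binExp_one]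
  field_simp
  try ring

set_option maxHeartbeats 1000000 in
lemma S_bound (p : ℝ) (hp : 0 < p) (hp1 : p ≤ 1) (ε : ℝ) (hε : 0 < ε) (hε2 : ε ≤ 1/2)
    (n : ℕ) (hn : 1 ≤ n) :
    |(n:ℝ) * (p * binExp n p (fun k => hFun ((k:ℝ)/((n:ℝ)*p)))) - (1-p)/2|
      ≤ 4*ε + (3/(2*ε^2)) * (3/p + 1/p^2) / n := by
  have hn0 : (0:ℝ) < n := by exact_mod_cast hn
  set c : ℝ := (n:ℝ)*p with hc
  have hc0 : 0 < c := by positivity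
  set q : ℝ := 1 - p with hq
  have hq0 : 0 ≤ q := by simp [hq]; linarith
  -- second moment
  have hy2 : binExp n p (fun k => ((k:ℝ)/c - 1)^2) = q/c := by
    have hpt : ∀ k:ℕ, ((k:ℝ)/c - 1)^2 = (1/c^2) * (((k:ℝ) - (n:ℝ)*p)^2) := by
      intro k; rw [hc]; field_simp; try ring
    rw [binExp_congr n p hpt, binExp_const_mul, binExp_central2]
    rw [hc, hq]; field_simp; try ring
  -- fourth moment
  have hy4 : binExp n p (fun k => (((k:ℝ)/c - 1)^2)^2) ≤ (3*(c*q)^2 + c*q)/c^4 := by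
    have hpt : ∀ k:ℕ, (((k:ℝ)/c - 1)^2)^2 = (1/c^4) * (((k:ℝ) - (n:ℝ)*p)^4) := by
      intro k; rw [hc]; field_simp; try ring
    rw [binExp_congr n p hpt, binExp_const_mul]
    have h4 := binExp_central4_le n p (le_of_lt hp) hp1
    have : (1/c^4) * binExp n p (fun k => ((k:ℝ) - n*p)^4)
        ≤ (1/c^4) * (3*((n:ℝ)*p*(1-p))^2 + (n:ℝ)*p*(1-p)) := by
      apply mul_le_mul_of_nonneg_left h4 (by positivity)
    refine this.trans (le_of_eq ?_)
    rw [hc, hq]; field_simp; try ring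
  -- difference expression
  have hsplit : (n:ℝ) * (p * binExp n p (fun k => hFun ((k:ℝ)/c))) - q/2
      = c * binExp n p (fun k => hFun ((k:ℝ)/c) - ((k:ℝ)/c - 1)^2/2) := by
    have hd : binExp n p (fun k => hFun ((k:ℝ)/c) - ((k:ℝ)/c - 1)^2/2)
        = binExp n p (fun k => hFun ((k:ℝ)/c))
          + (-(1:ℝ)/2) * binExp n p (fun k => ((k:ℝ)/c - 1)^2) := by
      rw [← binExp_const_mul, ← binExp_add]
      exact binExp_congr n p (fun k => by ring)
    rw [hd, hy2, hc]
    field_simp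
    try ring
  rw [hsplit]
  -- pointwise bound
  have hptb : ∀ k:ℕ, |hFun ((k:ℝ)/c) - ((k:ℝ)/c - 1)^2/2|
      ≤ 4*ε*((k:ℝ)/c - 1)^2 + (3/(2*ε^2))*((((k:ℝ)/c - 1)^2)^2) := by
    intro k
    exact hFun_eps (by positivity) hε hε2
  have habs := binExp_abs_le n p (le_of_lt hp) hp1 hptb
  have hrhs : binExp n p (fun k => 4*ε*((k:ℝ)/c - 1)^2 + (3/(2*ε^2))*((((k:ℝ)/c - 1)^2)^2))
      = 4*ε*(q/c) + (3/(2*ε^2)) * binExp n p (fun k => (((k:ℝ)/c - 1)^2)^2) := by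
    calc binExp n p (fun k => 4*ε*((k:ℝ)/c - 1)^2 + (3/(2*ε^2))*((((k:ℝ)/c - 1)^2)^2))
        = binExp n p (fun k => 4*ε*((k:ℝ)/c - 1)^2)
          + binExp n p (fun k => (3/(2*ε^2))*((((k:ℝ)/c - 1)^2)^2)) :=
          binExp_add n p _ _
      _ = 4*ε*(q/c) + (3/(2*ε^2)) * binExp n p (fun k => (((k:ℝ)/c - 1)^2)^2) := by
          rw [binExp_const_mul, binExp_const_mul, hy2]
  rw [hrhs] at habs
  have hq4 : (3/(2*ε^2)) * binExp n p (fun k => (((k:ℝ)/c - 1)^2)^2)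
      ≤ (3/(2*ε^2)) * ((3*(c*q)^2 + c*q)/c^4) := by
    apply mul_le_mul_of_nonneg_left hy4 (by positivity)
  have hfinal : c * |binExp n p (fun k => hFun ((k:ℝ)/c) - ((k:ℝ)/c - 1)^2/2)|
      ≤ c * (4*ε*(q/c) + (3/(2*ε^2)) * ((3*(c*q)^2 + c*q)/c^4)) := by
    apply mul_le_mul_of_nonneg_left (habs.trans (by linarith)) (le_of_lt hc0)
  rw [abs_mul, abs_of_pos hc0]
  refine hfinal.trans ?_
  -- c*(4ε q/c + (3/(2ε²)) (3(cq)² + cq)/c⁴) = 4εq + (3/(2ε²)) (3q²/c + q/c²)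
  have heq : c * (4*ε*(q/c) + (3/(2*ε^2)) * ((3*(c*q)^2 + c*q)/c^4))
      = 4*ε*q + (3/(2*ε^2)) * (3*q^2/c + q/c^2) := by
    field_simp
    try ring
  rw [heq]
  have h1 : 4*ε*q ≤ 4*ε := by nlinarith
  have h2 : 3*q^2/c + q/c^2 ≤ (3/p + 1/p^2) / n := by
    have hn1 : (1:ℝ) ≤ (n:ℝ) := by exact_mod_cast hn
    have hq1 : q ≤ 1 := by rw [hq]; linarith
    have a1 : 3*q^2/c ≤ 3/c := by gcongr; nlinarith
    have a2 : q/c^2 ≤ 1/c^2 := by gcongr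
    have a3 : 3/c = 3/p/n := by rw [hc]; field_simp; try ring
    have a4 : 1/c^2 ≤ 1/p^2/n := by
      rw [hc]
      calc 1/((n:ℝ)*p)^2 ≤ 1/(p^2*(n:ℝ)) := by
            apply one_div_le_one_div_of_le (by positivity)
            nlinarith [mul_nonneg (mul_nonneg (mul_nonneg hp.le hp.le)
              (sub_nonneg.mpr hn1)) hn0.le]
        _ = 1/p^2/n := by ring
    calc 3*q^2/c + q/c^2 ≤ 3/c + 1/c^2 := by linarith
      _ ≤ 3/p/n + 1/p^2/n := by rw [← a3]; linarith
      _ = (3/p + 1/p^2) / n := by ring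
  have h3 : (3/(2*ε^2)) * (3*q^2/c + q/c^2) ≤ (3/(2*ε^2)) * ((3/p + 1/p^2) / n) := by
    apply mul_le_mul_of_nonneg_left h2 (by positivity)
  exact le_trans (add_le_add h1 h3) (le_of_eq (by ring))


lemma S_tendsto (p : ℝ) (hp : 0 < p) (hp1 : p ≤ 1) :
    Tendsto (fun n : ℕ => (n:ℝ) * (p * binExp n p (fun k => hFun ((k:ℝ)/((n:ℝ)*p)))))
      atTop (nhds ((1-p)/2)) := by
  rw [Metric.tendsto_atTop]
  intro δ hδ
  set ε := min (δ/16) (1/2) with hε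
  have hε0 : 0 < ε := lt_min (by linarith) (by norm_num)
  have hε2 : ε ≤ 1/2 := min_le_right _ _
  have hεδ : 4*ε ≤ δ/4 := by
    have := min_le_left (δ/16) (1/2)
    have hεle : ε ≤ δ/16 := this
    linarith
  set C := (3/(2*ε^2)) * (3/p + 1/p^2) with hC
  have hC0 : 0 ≤ C := by positivity
  obtain ⟨N, hN⟩ := exists_nat_gt (2*C/δ + 1)
  refine ⟨max N 1, fun n hn => ?_⟩
  have hn1 : 1 ≤ n := le_trans (le_max_right N 1) hn
  have hn0 : (0:ℝ) < n := by exact_mod_cast hn1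
  have hnN : (N:ℝ) ≤ (n:ℝ) := by exact_mod_cast le_trans (le_max_left N 1) hn
  have hb := S_bound p hp hp1 ε hε0 hε2 n hn1
  rw [Real.dist_eq]
  have hgt : 2*C/δ < (n:ℝ) := by linarith
  have h2C : 2*C < (n:ℝ)*δ := by
    rw [div_lt_iff₀ hδ] at hgt
    linarith
  have hCn : C/(n:ℝ) < δ/2 := by
    rw [div_lt_iff₀ hn0]
    linarith
  calc |(n:ℝ) * (p * binExp n p (fun k => hFun ((k:ℝ)/((n:ℝ)*p)))) - (1-p)/2|
      ≤ 4*ε + C/(n:ℝ) := hb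
    _ < δ/4 + δ/2 := by linarith
    _ < δ := by linarith

lemma expEmpEnt_eq {α : Type*} [Fintype α] [DecidableEq α] (P : α → ℝ)
    (hsum : ∑ a, P a = 1) (n : ℕ) :
    expEmpEnt P n = ∑ a, binExp n (P a) (fun k => Real.negMulLog ((k:ℝ)/(n:ℝ))) := by
  unfold expEmpEnt pmfEnt empDist
  simp_rw [Finset.mul_sum]
  rw [Finset.sum_comm]
  exact Finset.sum_congr rfl
    (fun a _ => marg P hsum n a (fun k => Real.negMulLog ((k:ℝ)/(n:ℝ))))

/-- For i.i.d. samples from a full-support P on an alphabet of size m,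
E[Ĥ] = H(P) - ((m-1)·log e)/(2n) - o(1/n), i.e. n·(H(P) - E[Ĥ]) → (m-1)/2 (natural
logs, so log e = 1); in particular E[Ĥ] ≤ H(P) for every n ≥ 1. -/
theorem stmt7 {α : Type*} [Fintype α] [DecidableEq α]
    (P : α → ℝ) (hpos : ∀ a, 0 < P a) (hsum : ∑ a, P a = 1)
    (m : ℕ) (hm : Fintype.card α = m) :
    Tendsto (fun n : ℕ => (n : ℝ) * (pmfEnt P - expEmpEnt P n)) atTop
        (nhds (((m : ℝ) - 1) / 2))
      ∧ ∀ n : ℕ, 1 ≤ n → expEmpEnt P n ≤ pmfEnt P := by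
  have hple : ∀ a, P a ≤ 1 := fun a => by
    have h := Finset.single_le_sum (f := P) (fun b _ => (hpos b).le) (Finset.mem_univ a)
    rw [hsum] at h; exact h
  have hEq : ∀ n : ℕ, 1 ≤ n → pmfEnt P - expEmpEnt P n
      = ∑ a, P a * binExp n (P a) (fun k => hFun ((k:ℝ)/((n:ℝ)*(P a)))) := by
    intro n hn
    rw [expEmpEnt_eq P hsum n]
    unfold pmfEnt
    rw [← Finset.sum_sub_distrib]
    exact Finset.sum_congr rfl (fun a _ => perLetter n hn (P a) (hpos a))
  constructor
  · have hlim : Tendsto (fun n : ℕ => ∑ a, (n:ℝ) *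
        ((P a) * binExp n (P a) (fun k => hFun ((k:ℝ)/((n:ℝ)*(P a))))))
        atTop (nhds (∑ a, (1 - P a)/2)) :=
      tendsto_finset_sum _ (fun a _ => S_tendsto (P a) (hpos a) (hple a))
    have hsumval : (∑ a, (1 - P a)/2) = ((m:ℝ) - 1)/2 := by
      rw [← Finset.sum_div, Finset.sum_sub_distrib, hsum, Finset.sum_const,
        Finset.card_univ, hm]
      simp
    rw [← hsumval]
    apply Tendsto.congr' _ hlim
    filter_upwards [eventually_ge_atTop 1] with n hn
    rw [← Finset.mul_sum, ← hEq n hn]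
  · intro n hn
    have h := hEq n hn
    have hnn : 0 ≤ ∑ a, P a * binExp n (P a) (fun k => hFun ((k:ℝ)/((n:ℝ)*(P a)))) :=
      Finset.sum_nonneg (fun a _ => mul_nonneg (hpos a).le
        (binExp_nonneg n (P a) (hpos a).le (hple a)
          (fun k => hFun_nonneg (div_nonneg (Nat.cast_nonneg k) (mul_nonneg (Nat.cast_nonneg n) (hpos a).le)))))
    linarith [h ▸ hnn]
end

section
/- Under the near-common-reconstruction condition Pr{V ≠ V̂} ≤ ε with V̂ = q(U) deterministic and V taking at most J^ℓ values, the mutual information satisfies I(U; V) ≥ H(V̂) - 2Δ(ε), where Δ(ε) = h₂(ε) + ε·ℓ·log J. -/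
open Real BigOperators Finset

variable {Ω : Type*} [Fintype Ω]

/-- A finite probability assignment on `Ω`. -/
def IsProb (p : Ω → ℝ) : Prop := (∀ ω, 0 ≤ p ω) ∧ ∑ ω, p ω = 1

/-- Probability of the event `X = a`. -/
noncomputable def pr {α : Type*} [Fintype α] [DecidableEq α]
    (p : Ω → ℝ) (X : Ω → α) (a : α) : ℝ :=
  ∑ ω ∈ univ.filter (fun ω => X ω = a), p ω

/-- Shannon entropy (natural log) of a random variable `X` on the finite space `(Ω, p)`. -/
noncomputable def ent {α : Type*} [Fintype α] [DecidableEq α]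
    (p : Ω → ℝ) (X : Ω → α) : ℝ :=
  ∑ a, Real.negMulLog (pr p X a)

/-- Conditional entropy `H(X | Y) = H(X, Y) - H(Y)`. -/
noncomputable def condEnt {α β : Type*} [Fintype α] [DecidableEq α]
    [Fintype β] [DecidableEq β] (p : Ω → ℝ) (X : Ω → α) (Y : Ω → β) : ℝ :=
  ent p (fun ω => (X ω, Y ω)) - ent p Y

/-- Mutual information `I(X; Y) = H(X) - H(X | Y)`. -/
noncomputable def mutInf {α β : Type*} [Fintype α] [DecidableEq α]
    [Fintype β] [DecidableEq β] (p : Ω → ℝ) (X : Ω → α) (Y : Ω → β) : ℝ :=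
  ent p X - condEnt p X Y

/-- Conditional mutual information `I(X; Y | Z) = H(X|Z) + H(Y|Z) - H(X,Y|Z)`. -/
noncomputable def condMutInf {α β γ : Type*} [Fintype α] [DecidableEq α]
    [Fintype β] [DecidableEq β] [Fintype γ] [DecidableEq γ]
    (p : Ω → ℝ) (X : Ω → α) (Y : Ω → β) (Z : Ω → γ) : ℝ :=
  condEnt p X Z + condEnt p Y Z - condEnt p (fun ω => (X ω, Y ω)) Z

/-- Binary entropy function (natural log). -/
noncomputable def binEnt (x : ℝ) : ℝ := Real.negMulLog x + Real.negMulLog (1 - x)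

section Helpers

variable {α : Type*} [Fintype α] [DecidableEq α]
variable {β : Type*} [Fintype β] [DecidableEq β]
variable {γ : Type*} [Fintype γ] [DecidableEq γ]

lemma pr_eq_sum_ite (p : Ω → ℝ) (X : Ω → α) (a : α) :
    pr p X a = ∑ ω, if X ω = a then p ω else 0 := by
  rw [pr, Finset.sum_filter]

lemma pr_nonneg (p : Ω → ℝ) (hp : ∀ ω, 0 ≤ p ω) (X : Ω → α) (a : α) :
    0 ≤ pr p X a :=
  Finset.sum_nonneg fun ω _ => hp ω

lemma sum_pr (p : Ω → ℝ) (X : Ω → α) : ∑ a, pr p X a = ∑ ω, p ω := by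
  simp only [pr_eq_sum_ite]
  rw [Finset.sum_comm]
  simp

lemma sum_pr_filter (p : Ω → ℝ) (X : Ω → α) (P : α → Prop) [DecidablePred P] :
    ∑ a ∈ univ.filter P, pr p X a = ∑ ω ∈ univ.filter (fun ω => P (X ω)), p ω := by
  simp only [pr_eq_sum_ite, Finset.sum_filter]
  have h1 : ∀ a, (if P a then ∑ ω, (if X ω = a then p ω else 0) else 0)
      = ∑ ω, (if X ω = a then (if P a then p ω else 0) else 0) := by
    intro a
    split_ifs with h
    · apply Finset.sum_congr rfl; intro ω _; simp [h]
    · symm; apply Finset.sum_eq_zero; intro ω _; simp [h]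
  rw [Finset.sum_congr rfl fun a _ => h1 a, Finset.sum_comm]
  apply Finset.sum_congr rfl
  intro ω _
  simp only [Finset.sum_ite_eq, mem_univ, if_true]

lemma pr_snd (p : Ω → ℝ) (X : Ω → α) (Y : Ω → β) (y : β) :
    pr p Y y = ∑ x, pr p (fun ω => (X ω, Y ω)) (x, y) := by
  simp only [pr_eq_sum_ite]
  rw [Finset.sum_comm]
  apply Finset.sum_congr rfl
  intro ω _
  by_cases hy : Y ω = y
  · simp [hy, Prod.ext_iff]
  · simp [hy, Prod.ext_iff]

lemma pr_fst (p : Ω → ℝ) (X : Ω → α) (Y : Ω → β) (x : α) :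
    pr p X x = ∑ y, pr p (fun ω => (X ω, Y ω)) (x, y) := by
  simp only [pr_eq_sum_ite]
  rw [Finset.sum_comm]
  apply Finset.sum_congr rfl
  intro ω _
  by_cases hx : X ω = x
  · simp [hx, Prod.ext_iff]
  · simp [hx, Prod.ext_iff]

lemma ent_comp_inj (p : Ω → ℝ) (X : Ω → α) (f : α → β) (hf : Function.Injective f) :
    ent p (fun ω => f (X ω)) = ent p X := by
  have h0 : ∀ b ∈ (univ : Finset β), b ∉ univ.image f →
      negMulLog (pr p (fun ω => f (X ω)) b) = 0 := by
    intro b _ hb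
    have hz : pr p (fun ω => f (X ω)) b = 0 := by
      rw [pr, Finset.filter_false_of_mem, Finset.sum_empty]
      intro ω _ h
      exact hb (Finset.mem_image.2 ⟨X ω, Finset.mem_univ _, h⟩)
    simp [hz]
  rw [ent, ent, ← Finset.sum_subset (Finset.subset_univ (univ.image f)) h0,
    Finset.sum_image (fun a _ a' _ h => hf h)]
  apply Finset.sum_congr rfl
  intro a _
  congr 1
  rw [pr, pr]
  congr 1
  ext ω
  simp [hf.eq_iff]

lemma sum_negMulLog_ge (s : Finset γ) (f : γ → ℝ) (hf : ∀ i ∈ s, 0 ≤ f i) :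
    negMulLog (∑ i ∈ s, f i) ≤ ∑ i ∈ s, negMulLog (f i) := by
  have key : ∀ i ∈ s, f i * log (f i) ≤ f i * log (∑ j ∈ s, f j) := by
    intro i hi
    rcases eq_or_lt_of_le (hf i hi) with h | h
    · simp [← h]
    · exact mul_le_mul_of_nonneg_left
        (Real.log_le_log h (Finset.single_le_sum hf hi)) h.le
  calc negMulLog (∑ i ∈ s, f i) = -∑ i ∈ s, f i * log (∑ j ∈ s, f j) := by
        rw [negMulLog, neg_mul, Finset.sum_mul]
    _ ≤ -∑ i ∈ s, f i * log (f i) := neg_le_neg (Finset.sum_le_sum key)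
    _ = ∑ i ∈ s, negMulLog (f i) := by
        rw [← Finset.sum_neg_distrib]
        exact Finset.sum_congr rfl fun i _ => by rw [negMulLog, neg_mul]

lemma ent_le_ent_pair (p : Ω → ℝ) (hp : ∀ ω, 0 ≤ p ω) (X : Ω → α) (Y : Ω → β) :
    ent p X ≤ ent p (fun ω => (X ω, Y ω)) := by
  rw [ent, ent, Fintype.sum_prod_type]
  apply Finset.sum_le_sum
  intro x _
  rw [pr_fst p X Y x]
  exact sum_negMulLog_ge _ _ (fun y _ => pr_nonneg p hp _ _)

lemma gibbs {ι : Type*} [Fintype ι] (a b : ι → ℝ) (ha : ∀ i, 0 ≤ a i)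
    (hb : ∀ i, 0 ≤ b i) (hab : ∀ i, b i = 0 → a i = 0) (hs : ∑ i, b i ≤ ∑ i, a i) :
    ∑ i, negMulLog (a i) ≤ ∑ i, -(a i * log (b i)) := by
  have key : ∀ i ∈ (univ : Finset ι),
      negMulLog (a i) + a i * log (b i) ≤ b i - a i := by
    intro i _
    rcases eq_or_lt_of_le (ha i) with h | h
    · simp only [← h, negMulLog, neg_zero, zero_mul, add_zero, sub_zero, neg_mul]
      exact hb i
    · have hbi : 0 < b i := by
        rcases eq_or_lt_of_le (hb i) with hb' | hb'
        · exact absurd (hab i hb'.symm) (by linarith)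
        · exact hb'
      have e1 : negMulLog (a i) + a i * log (b i) = a i * log (b i / a i) := by
        rw [Real.log_div hbi.ne' h.ne', negMulLog]; ring
      rw [e1]
      calc a i * log (b i / a i) ≤ a i * (b i / a i - 1) :=
            mul_le_mul_of_nonneg_left (Real.log_le_sub_one_of_pos (div_pos hbi h)) h.le
        _ = b i - a i := by field_simp
  have h1 : ∑ i, (negMulLog (a i) + a i * log (b i)) ≤ ∑ i, (b i - a i) :=
    Finset.sum_le_sum key
  rw [Finset.sum_sub_distrib, Finset.sum_add_distrib] at h1
  have h3 : ∑ i, -(a i * log (b i)) = -∑ i, a i * log (b i) := by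
    rw [Finset.sum_neg_distrib]
  linarith


lemma fano_arith1 (N : ℕ) (hNpos : (0:ℝ) < N) (ε : ℝ) (hε0 : 0 ≤ ε) (hε1 : ε ≤ 1)
    (hcase : ε * N ≤ (N:ℝ) - 1) (S1 S2 : ℝ) (hS2n : 0 ≤ S2) (hS2ε : S2 ≤ ε)
    (hS12 : S1 + S2 = 1) :
    (-log (1 - ε)) * S1 + (-log (ε / ((N:ℝ) - 1))) * S2 ≤ binEnt ε + ε * log N := by
  have h1ε : 1 / (N:ℝ) ≤ 1 - ε := by rw [div_le_iff₀ hNpos]; nlinarith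
  have h1εpos : (0:ℝ) < 1 - ε := lt_of_lt_of_le (by positivity) h1ε
  rcases eq_or_lt_of_le hε0 with hε | hε
  · have hεz : ε = 0 := hε.symm
    have hS2z : S2 = 0 := le_antisymm (by linarith) hS2n
    have hS1one : S1 = 1 := by linarith
    rw [hεz, hS2z, hS1one]
    simp [binEnt]
  · have hN1 : (0:ℝ) < (N:ℝ) - 1 := by nlinarith
    have hAnn : 0 ≤ -log (1 - ε) := by
      simp only [neg_nonneg]; exact Real.log_nonpos (by linarith) (by linarith)
    have hAlogN : -log (1 - ε) ≤ log N := by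
      have hmul : (0:ℝ) ≤ log ((N:ℝ) * (1 - ε)) := by
        apply Real.log_nonneg
        rw [div_le_iff₀ hNpos] at h1ε; nlinarith
      rw [Real.log_mul hNpos.ne' h1εpos.ne'] at hmul
      linarith
    have hlogε : log ε ≤ 0 := Real.log_nonpos hε0 hε1
    have hBval : -log (ε / ((N:ℝ) - 1)) = log ((N:ℝ) - 1) - log ε := by
      rw [Real.log_div hε.ne' hN1.ne']; ring
    have hlogN1 : log ((N:ℝ) - 1) ≤ log N := Real.log_le_log hN1 (by linarith)
    have hAC : -log (1 - ε) ≤ log N - log ε := by linarith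
    have hBC : -log (ε / ((N:ℝ) - 1)) ≤ log N - log ε := by rw [hBval]; linarith
    have hrhs : binEnt ε + ε * log N = (1 - ε) * (-log (1 - ε)) + ε * (log N - log ε) := by
      rw [binEnt, negMulLog, negMulLog]; ring
    rw [hrhs]
    have h1 : (ε - S2) * (-log (1 - ε)) ≤ (ε - S2) * (log N - log ε) :=
      mul_le_mul_of_nonneg_left hAC (by linarith)
    have h2 : S2 * (-log (ε / ((N:ℝ) - 1))) ≤ S2 * (log N - log ε) :=
      mul_le_mul_of_nonneg_left hBC hS2n
    have hS1v : S1 = 1 - S2 := by linarith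
    rw [hS1v]
    nlinarith [h1, h2]

lemma fano_arith2 (N : ℕ) (hNpos : (0:ℝ) < N) (ε : ℝ) (hε0 : 0 ≤ ε) (hε1 : ε ≤ 1)
    (hcase : (N:ℝ) - 1 < ε * N) : log N ≤ binEnt ε + ε * log N := by
  have hbin : negMulLog (1 - ε) ≤ binEnt ε := by
    rw [binEnt]; linarith [Real.negMulLog_nonneg hε0 hε1]
  have hkey : (1 - ε) * log N ≤ negMulLog (1 - ε) := by
    rcases eq_or_lt_of_le hε1 with h | h
    · rw [h]; simp
    · have h1εpos : (0:ℝ) < 1 - ε := by linarith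
      have hlt : 1 - ε < ((N:ℝ))⁻¹ := by
        have h2 : (1 - ε) * N < 1 := by nlinarith
        calc 1 - ε = (1 - ε) * N * ((N:ℝ))⁻¹ := by field_simp
          _ < 1 * ((N:ℝ))⁻¹ := mul_lt_mul_of_pos_right h2 (inv_pos.2 hNpos)
          _ = ((N:ℝ))⁻¹ := one_mul _
      have hloglt : log (1 - ε) < log ((N:ℝ))⁻¹ := Real.log_lt_log h1εpos hlt
      rw [Real.log_inv] at hloglt
      rw [negMulLog]
      nlinarith [mul_lt_mul_of_pos_left hloglt h1εpos]
  linarith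

set_option maxHeartbeats 1000000 in
/-- Fano's inequality. -/
lemma fano (p : Ω → ℝ) (hp : IsProb p) (X : Ω → β) (Y : Ω → γ) (g : γ → β)
    (ε : ℝ) (hε0 : 0 ≤ ε) (hε1 : ε ≤ 1)
    (herr : ∑ ω ∈ univ.filter (fun ω => X ω ≠ g (Y ω)), p ω ≤ ε) :
    condEnt p X Y ≤ binEnt ε + ε * Real.log (Fintype.card β) := by
  obtain ⟨hp0, hp1⟩ := hp
  have hΩ : Nonempty Ω := by
    by_contra h
    rw [not_nonempty_iff] at h
    rw [Finset.univ_eq_empty, Finset.sum_empty] at hp1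
    norm_num at hp1
  have hβ : Nonempty β := ⟨X (Classical.arbitrary Ω)⟩
  set N := Fintype.card β with hNdef
  have hN : 1 ≤ N := Fintype.card_pos
  have hNpos : (0:ℝ) < N := by exact_mod_cast hN
  set Z : Ω → β × γ := fun ω => (X ω, Y ω) with hZ
  set j : β × γ → ℝ := pr p Z with hj
  set s : γ → ℝ := pr p Y with hs
  have hj0 : ∀ c, 0 ≤ j c := fun c => pr_nonneg p hp0 _ _
  have hs0 : ∀ y, 0 ≤ s y := fun y => pr_nonneg p hp0 _ _
  have hjsum : ∑ c, j c = 1 := by rw [hj, sum_pr, hp1]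
  have hssum : ∑ y, s y = 1 := by rw [hs, sum_pr, hp1]
  have hs_eq : ∀ y, s y = ∑ x, j (x, y) := fun y => pr_snd p X Y y
  have hjs : ∀ x y, j (x, y) ≤ s y := by
    intro x y
    rw [hs_eq y]
    exact Finset.single_le_sum (f := fun x => j (x, y)) (fun i _ => hj0 _) (mem_univ x)
  -- total error mass
  have hPe : ∑ c ∈ univ.filter (fun c : β × γ => ¬ c.1 = g c.2), j c ≤ ε := by
    rw [hj, sum_pr_filter]
    calc ∑ ω ∈ univ.filter (fun ω => ¬ (Z ω).1 = g (Z ω).2), p ω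
        = ∑ ω ∈ univ.filter (fun ω => X ω ≠ g (Y ω)), p ω := rfl
      _ ≤ ε := herr
  have hjoff : ∀ c : β × γ, ¬ c.1 = g c.2 → j c ≤ ε := by
    intro c hc
    refine le_trans ?_ hPe
    exact Finset.single_le_sum (f := j) (fun i _ => hj0 _)
      (Finset.mem_filter.2 ⟨mem_univ _, hc⟩)
  have hce : condEnt p X Y = ∑ c, negMulLog (j c) - ∑ y, negMulLog (s y) := rfl
  rw [hce]
  by_cases hcase : ε * N ≤ (N:ℝ) - 1
  · -- main case
    have h1ε : 1 / (N:ℝ) ≤ 1 - ε := by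
      rw [div_le_iff₀ hNpos]; nlinarith
    have h1εpos : (0:ℝ) < 1 - ε := lt_of_lt_of_le (by positivity) h1ε
    set Q : β × γ → ℝ := fun c => if c.1 = g c.2 then 1 - ε else ε / ((N:ℝ) - 1) with hQ
    have hQ0 : ∀ c, 0 ≤ Q c := by
      intro c; rw [hQ]; dsimp only
      split_ifs
      · linarith
      · apply div_nonneg hε0; simp only [sub_nonneg]; exact_mod_cast hN
    set b : β × γ → ℝ := fun c => s c.2 * Q c with hb
    have hb0 : ∀ c, 0 ≤ b c := fun c => mul_nonneg (hs0 _) (hQ0 _)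
    have hab : ∀ c, b c = 0 → j c = 0 := by
      intro c hbc
      rcases mul_eq_zero.1 hbc with hsc | hQc
      · have h1 : j c ≤ s c.2 := by simpa using hjs c.1 c.2
        rw [hsc] at h1
        exact le_antisymm h1 (hj0 c)
      · rw [hQ] at hQc; dsimp only at hQc
        split_ifs at hQc with hd
        · linarith
        · have hε_eq : ε = 0 := by
            rcases div_eq_zero_iff.1 hQc with h | h
            · exact h
            · nlinarith
          exact le_antisymm (by simpa [hε_eq] using hjoff c hd) (hj0 c)
    have hQsum : ∀ y, ∑ x, Q (x, y) ≤ 1 := by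
      intro y
      have hsplit : ∑ x, Q (x, y) = Q (g y, y) + ∑ x ∈ univ.erase (g y), Q (x, y) :=
        (Finset.add_sum_erase _ (fun x => Q (x, y)) (mem_univ _)).symm
      have hconst : ∑ x ∈ univ.erase (g y), Q (x, y) = ((N - 1 : ℕ) : ℝ) * (ε / ((N:ℝ) - 1)) := by
        have he : ∀ x ∈ univ.erase (g y), Q (x, y) = ε / ((N:ℝ) - 1) := by
          intro x hx
          show (if x = g y then 1 - ε else ε / ((N:ℝ) - 1)) = ε / ((N:ℝ) - 1)
          rw [if_neg (Finset.ne_of_mem_erase hx)]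
        rw [Finset.sum_congr rfl he, Finset.sum_const, nsmul_eq_mul,
          Finset.card_erase_of_mem (mem_univ _), Finset.card_univ]
      have hcast : ((N - 1 : ℕ) : ℝ) = (N:ℝ) - 1 := by
        rw [Nat.cast_sub hN, Nat.cast_one]
      have hmul : ((N:ℝ) - 1) * (ε / ((N:ℝ) - 1)) ≤ ε := by
        rcases eq_or_ne ((N:ℝ) - 1) 0 with h | h
        · simp [h]; exact hε0
        · rw [mul_comm, div_mul_cancel₀ ε h]
      have hgy : Q (g y, y) = 1 - ε := by
        show (if g y = g y then 1 - ε else ε / ((N:ℝ) - 1)) = 1 - ε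
        rw [if_pos rfl]
      rw [hsplit, hgy, hconst, hcast]
      linarith
    have hbsum : ∑ c, b c ≤ 1 := by
      have : ∑ c : β × γ, b c = ∑ y, ∑ x, s y * Q (x, y) := by
        rw [Fintype.sum_prod_type, Finset.sum_comm]
      rw [this]
      calc ∑ y, ∑ x, s y * Q (x, y) = ∑ y, s y * ∑ x, Q (x, y) := by
            exact Finset.sum_congr rfl fun y _ => (Finset.mul_sum _ _ _).symm
        _ ≤ ∑ y, s y * 1 := Finset.sum_le_sum fun y _ =>
            mul_le_mul_of_nonneg_left (hQsum y) (hs0 y)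
        _ = 1 := by simp [hssum]
    have hgibbs := gibbs j b hj0 hb0 hab (by rw [hjsum]; exact hbsum)
    have hsplitlog : ∀ c, -(j c * log (b c)) = -(j c * log (s c.2)) + -(j c * log (Q c)) := by
      intro c
      rcases eq_or_ne (j c) 0 with h | h
      · simp [h]
      · have hbne : b c ≠ 0 := fun e => h (hab c e)
        have hsne : s c.2 ≠ 0 := fun e => hbne (by rw [hb]; dsimp only; rw [e, zero_mul])
        have hQne : Q c ≠ 0 := fun e => hbne (by rw [hb]; dsimp only; rw [e, mul_zero])
        have : log (b c) = log (s c.2) + log (Q c) := by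
          rw [hb]; dsimp only; exact Real.log_mul hsne hQne
        rw [this]; ring
    have hfirst : ∑ c : β × γ, -(j c * log (s c.2)) = ∑ y, negMulLog (s y) := by
      rw [Fintype.sum_prod_type, Finset.sum_comm]
      apply Finset.sum_congr rfl
      intro y _
      dsimp only
      rw [Finset.sum_neg_distrib, ← Finset.sum_mul, ← hs_eq y, negMulLog, neg_mul]
    set A : ℝ := -log (1 - ε) with hA
    set B : ℝ := -log (ε / ((N:ℝ) - 1)) with hB
    set S2 : ℝ := ∑ c ∈ univ.filter (fun c : β × γ => ¬ c.1 = g c.2), j c with hS2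
    have hS2nonneg : 0 ≤ S2 :=
      Finset.sum_nonneg fun c _ => hj0 c
    have hS1S2 : ∑ c ∈ univ.filter (fun c : β × γ => c.1 = g c.2), j c + S2 = 1 := by
      rw [hS2, Finset.sum_filter_add_sum_filter_not, hjsum]
    set S1 : ℝ := ∑ c ∈ univ.filter (fun c : β × γ => c.1 = g c.2), j c with hS1
    have hsecond : ∑ c : β × γ, -(j c * log (Q c)) = A * S1 + B * S2 := by
      rw [← Finset.sum_filter_add_sum_filter_not univ (fun c : β × γ => c.1 = g c.2)]
      congr 1
      · rw [hS1, Finset.mul_sum]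
        apply Finset.sum_congr rfl
        intro c hc
        rw [hQ]; dsimp only
        rw [if_pos (Finset.mem_filter.1 hc).2]; ring
      · rw [hS2, Finset.mul_sum]
        apply Finset.sum_congr rfl
        intro c hc
        rw [hQ]; dsimp only
        rw [if_neg (Finset.mem_filter.1 hc).2]; ring
    have hchain : ∑ c, negMulLog (j c) ≤ ∑ y, negMulLog (s y) + (A * S1 + B * S2) := by
      calc ∑ c, negMulLog (j c) ≤ ∑ c, -(j c * log (b c)) := hgibbs
        _ = ∑ c : β × γ, -(j c * log (s c.2)) + ∑ c : β × γ, -(j c * log (Q c)) := by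
            rw [← Finset.sum_add_distrib]
            exact Finset.sum_congr rfl fun c _ => hsplitlog c
        _ = ∑ y, negMulLog (s y) + (A * S1 + B * S2) := by rw [hfirst, hsecond]
    have hfinal : A * S1 + B * S2 ≤ binEnt ε + ε * log N := by
      rw [hA, hB]
      exact fano_arith1 N hNpos ε hε0 hε1 hcase S1 S2 hS2nonneg hPe hS1S2
    linarith [hchain, hfinal]
  · -- degenerate case: ε is large, use uniform bound
    push_neg at hcase
    set b : β × γ → ℝ := fun c => s c.2 * ((N:ℝ))⁻¹ with hb
    have hb0 : ∀ c, 0 ≤ b c := fun c => mul_nonneg (hs0 _) (by positivity)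
    have hab : ∀ c, b c = 0 → j c = 0 := by
      intro c hbc
      rcases mul_eq_zero.1 hbc with hsc | hNc
      · have h1 : j c ≤ s c.2 := by simpa using hjs c.1 c.2
        rw [hsc] at h1
        exact le_antisymm h1 (hj0 c)
      · exact absurd hNc (inv_ne_zero hNpos.ne')
    have hbsum : ∑ c, b c ≤ 1 := by
      have h1 : ∑ c : β × γ, b c = ∑ y, ∑ x : β, s y * ((N:ℝ))⁻¹ := by
        rw [Fintype.sum_prod_type, Finset.sum_comm]
      rw [h1]
      have h2 : ∀ y, ∑ x : β, s y * ((N:ℝ))⁻¹ = s y := by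
        intro y
        rw [Finset.sum_const, Finset.card_univ, nsmul_eq_mul, ← hNdef]
        field_simp
      rw [Finset.sum_congr rfl fun y _ => h2 y, hssum]
    have hgibbs := gibbs j b hj0 hb0 hab (by rw [hjsum]; exact hbsum)
    have hsplitlog : ∀ c, -(j c * log (b c)) = -(j c * log (s c.2)) + j c * log N := by
      intro c
      rcases eq_or_ne (j c) 0 with h | h
      · simp [h]
      · have hbne : b c ≠ 0 := fun e => h (hab c e)
        have hsne : s c.2 ≠ 0 := fun e => hbne (by rw [hb]; dsimp only; rw [e, zero_mul])
        have : log (b c) = log (s c.2) + log ((N:ℝ))⁻¹ := by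
          rw [hb]; dsimp only
          exact Real.log_mul hsne (inv_ne_zero hNpos.ne')
        rw [this, Real.log_inv]; ring
    have hfirst : ∑ c : β × γ, -(j c * log (s c.2)) = ∑ y, negMulLog (s y) := by
      rw [Fintype.sum_prod_type, Finset.sum_comm]
      apply Finset.sum_congr rfl
      intro y _
      dsimp only
      rw [Finset.sum_neg_distrib, ← Finset.sum_mul, ← hs_eq y, negMulLog, neg_mul]
    have hchain : ∑ c, negMulLog (j c) ≤ ∑ y, negMulLog (s y) + log N := by
      calc ∑ c, negMulLog (j c) ≤ ∑ c, -(j c * log (b c)) := hgibbs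
        _ = ∑ c : β × γ, -(j c * log (s c.2)) + ∑ c, j c * log N := by
            rw [← Finset.sum_add_distrib]
            exact Finset.sum_congr rfl fun c _ => hsplitlog c
        _ = ∑ y, negMulLog (s y) + log N := by
            rw [hfirst, ← Finset.sum_mul, hjsum, one_mul]
    have hfinal : log N ≤ binEnt ε + ε * log N := fano_arith2 N hNpos ε hε0 hε1 hcase
    linarith [hchain, hfinal]

end Helpers

/-- Under near-common reconstruction Pr{V ≠ q(U)} ≤ ε, with V over an
alphabet of size at most J^ℓ: I(U; V) ≥ H(q(U)) - 2Δ(ε), Δ(ε) = h₂(ε) + ε·ℓ·log J. -/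
theorem stmt14 {α β : Type*} [Fintype α] [DecidableEq α] [Fintype β] [DecidableEq β]
    (p : Ω → ℝ) (hp : IsProb p)
    (U : Ω → α) (V : Ω → β) (q : α → β)
    (J ℓ : ℕ) (hβ : Fintype.card β ≤ J ^ ℓ)
    (ε : ℝ) (hε0 : 0 ≤ ε) (hε1 : ε ≤ 1)
    (herr : ∑ ω ∈ univ.filter (fun ω => V ω ≠ q (U ω)), p ω ≤ ε) :
    mutInf p U V ≥ ent p (fun ω => q (U ω)) - 2 * (binEnt ε + ε * ℓ * Real.log J) := by
  obtain ⟨hp0, hp1⟩ := hp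
  have hΩ : Nonempty Ω := by
    by_contra h
    rw [not_nonempty_iff] at h
    rw [Finset.univ_eq_empty, Finset.sum_empty] at hp1
    norm_num at hp1
  have hcard : 0 < Fintype.card β := @Fintype.card_pos _ _ ⟨V (Classical.arbitrary Ω)⟩
  have hlog : Real.log (Fintype.card β) ≤ (ℓ:ℝ) * Real.log J := by
    have h1 : ((Fintype.card β : ℕ) : ℝ) ≤ (J:ℝ)^ℓ := by exact_mod_cast hβ
    have h2 := Real.log_le_log (by exact_mod_cast hcard) h1
    rwa [Real.log_pow] at h2
  have hΔ : binEnt ε + ε * Real.log (Fintype.card β) ≤ binEnt ε + ε * ℓ * Real.log J := by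
    have := mul_le_mul_of_nonneg_left hlog hε0
    nlinarith
  have fano1 : condEnt p V U ≤ binEnt ε + ε * ℓ * Real.log J :=
    le_trans (fano p ⟨hp0, hp1⟩ V U q ε hε0 hε1 herr) hΔ
  have fano2 : condEnt p (fun ω => q (U ω)) V ≤ binEnt ε + ε * ℓ * Real.log J := by
    refine le_trans (fano p ⟨hp0, hp1⟩ (fun ω => q (U ω)) V id ε hε0 hε1 ?_) hΔ
    have hset : univ.filter (fun ω => q (U ω) ≠ id (V ω))
        = univ.filter (fun ω => V ω ≠ q (U ω)) := by
      ext ω; simp [ne_comm]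
    rw [hset]; exact herr
  have hswap : ent p (fun ω => (U ω, V ω)) = ent p (fun ω => (V ω, U ω)) := by
    have h := ent_comp_inj p (fun ω => (V ω, U ω)) Prod.swap Prod.swap_injective
    simpa [Prod.swap] using h
  have hmut : mutInf p U V = ent p V - condEnt p V U := by
    rw [mutInf, condEnt, condEnt, hswap]; ring
  have hhat : ent p (fun ω => q (U ω)) ≤ ent p V + condEnt p (fun ω => q (U ω)) V := by
    have h1 : ent p (fun ω => q (U ω)) ≤ ent p (fun ω => (q (U ω), V ω)) :=
      ent_le_ent_pair p hp0 _ _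
    rw [condEnt]
    linarith
  rw [hmut]
  linarith
end
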